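/- (Proposition 2.) Under (A1) and (A2), the sequence u_0 := ψ_2, u_n := T u_{n−1} (n ≥ 1) is pointwise nondecreasing, there exists u* ∈ B_W(S) with u*(i) = lim_{n→∞} u_n(i) for all i ∈ S, and u* is a fixed point of T: T u*(i) = u*(i) for all i ∈ S. -/

import Mathlib

open MeasureTheory Filter Topology

noncomputable section

variable {U V : Type}

/-- Integrated reward rate `r̃(i,μ,ν)`. -/
def rT [MeasurableSpace U] [MeasurableSpace V] (r : ℕ → U → V → ℝ) (i : ℕ)
    (μ : ProbabilityMeasure U) (ν : ProbabilityMeasure V) : ℝ :=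
  ∫ b, (∫ a, r i a b ∂(μ : Measure U)) ∂(ν : Measure V)

/-- Integrated transition rate `q̃(j|i,μ,ν)`. -/
def qT [MeasurableSpace U] [MeasurableSpace V] (q : ℕ → ℕ → U → V → ℝ) (i j : ℕ)
    (μ : ProbabilityMeasure U) (ν : ProbabilityMeasure V) : ℝ :=
  ∫ b, (∫ a, q i j a b ∂(μ : Measure U)) ∂(ν : Measure V)

/-- `p̃(j|i,μ,ν) = q̃(j|i,μ,ν)/(q(i)+1) + δ_{ij}`. -/
def pT [MeasurableSpace U] [MeasurableSpace V] (q : ℕ → ℕ → U → V → ℝ) (qb : ℕ → ℝ)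
    (i j : ℕ) (μ : ProbabilityMeasure U) (ν : ProbabilityMeasure V) : ℝ :=
  qT q i j μ ν / (qb i + 1) + (if i = j then (1 : ℝ) else 0)

/-- `H_α(i,φ)`. -/
def Hop [MeasurableSpace U] [MeasurableSpace V] (q : ℕ → ℕ → U → V → ℝ)
    (r : ℕ → U → V → ℝ) (φ : ℕ → ℝ) (i : ℕ) : ℝ :=
  ⨅ μ : ProbabilityMeasure U, ⨆ ν : ProbabilityMeasure V,
    (rT r i μ ν + ∑' j, qT q i j μ ν * φ j)

/-- `I_α(i,φ)`. -/
def Iop [MeasurableSpace U] [MeasurableSpace V] (q : ℕ → ℕ → U → V → ℝ)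
    (r : ℕ → U → V → ℝ) (qb : ℕ → ℝ) (α : ℝ) (φ : ℕ → ℝ) (i : ℕ) : ℝ :=
  ⨅ μ : ProbabilityMeasure U, ⨆ ν : ProbabilityMeasure V,
    (rT r i μ ν / (α + qb i + 1) +
      ((qb i + 1) / (α + qb i + 1)) * ∑' j, pT q qb i j μ ν * φ j)

/-- The operator `T`. -/
def Tmap [MeasurableSpace U] [MeasurableSpace V] (q : ℕ → ℕ → U → V → ℝ)
    (r : ℕ → U → V → ℝ) (qb : ℕ → ℝ) (α : ℝ) (ψ₁ ψ₂ : ℕ → ℝ)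
    (φ : ℕ → ℝ) (i : ℕ) : ℝ :=
  min (max (Iop q r qb α φ i) (ψ₂ i)) (ψ₁ i)

/-- The space `B_W(S)` of nonnegative functions with finite weighted sup-norm. -/
def BW (W : ℕ → ℝ) : Set (ℕ → ℝ) :=
  {f | (∀ i, 0 ≤ f i) ∧ BddAbove (Set.range fun i => f i / W i)}

/-- The weighted sup-norm `‖f‖_W`. -/
def normW (W : ℕ → ℝ) (f : ℕ → ℝ) : ℝ := ⨆ i, f i / W i

/-- Basic properties of the transition rates: nonnegativity off the diagonal,
conservativeness and stability (`qb i` is the least upper bound `q(i)`). -/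
structure RateHyps (q : ℕ → ℕ → U → V → ℝ) (qb : ℕ → ℝ) : Prop where
  off_nonneg : ∀ i j a b, j ≠ i → 0 ≤ q i j a b
  summable : ∀ i a b, Summable fun j => q i j a b
  conservative : ∀ i a b, ∑' j, q i j a b = 0
  stable : ∀ i, IsLUB (Set.range fun ab : U × V =>
    ∑' j, if j = i then (0 : ℝ) else q i j ab.1 ab.2) (qb i)

/-- Assumption (A1) (with `w 0, …, w (N-1)` playing the role of `w_1, …, w_N`,
and `W = w_1 + ⋯ + w_N`). -/
structure A1Hyps (q : ℕ → ℕ → U → V → ℝ) (qb : ℕ → ℝ) (N : ℕ) (w : ℕ → ℕ → ℝ)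
    (c : ℝ) (W : ℕ → ℝ) : Prop where
  N_pos : 0 < N
  c_pos : 0 < c
  w_nonneg : ∀ n i, 0 ≤ w n i
  w_summable : ∀ n, n < N → ∀ i a b, Summable fun j => q i j a b * w n j
  w_rec : ∀ n, n + 1 < N → ∀ i a b, ∑' j, q i j a b * w n j ≤ w (n + 1) i
  w_last : ∀ i a b, ∑' j, q i j a b * w (N - 1) j ≤ 0
  qb_le : ∀ i, qb i ≤ c * W i
  W_def : ∀ i, W i = ∑ n ∈ Finset.range N, w n i
  W_pos : ∀ i, 0 < W i

/-- Assumption (A2), parts (ii)-(iv) concerning `r` and `q`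
(compactness of `U` and `V` is imposed through instance arguments). -/
structure A2Hyps [TopologicalSpace U] [TopologicalSpace V] (q : ℕ → ℕ → U → V → ℝ)
    (r : ℕ → U → V → ℝ) (W : ℕ → ℝ) (M : ℝ) : Prop where
  r_nonneg : ∀ i a b, 0 ≤ r i a b
  r_cont : ∀ i, Continuous fun ab : U × V => r i ab.1 ab.2
  q_cont : ∀ i j, Continuous fun ab : U × V => q i j ab.1 ab.2
  qW_cont : ∀ i, Continuous fun ab : U × V => ∑' j, q i j ab.1 ab.2 * W j
  r_le : ∀ i a b, r i a b ≤ M * W i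

/-- Assumption (A2), part (iv) concerning the stopped pay-off functions. -/
structure PsiHyps (ψ₁ ψ₂ : ℕ → ℝ) (W : ℕ → ℝ) (M : ℝ) : Prop where
  ψ₂_nonneg : ∀ i, 0 ≤ ψ₂ i
  ψ₁_le : ∀ i, ψ₁ i ≤ M * W i
  ψ₂_lt_ψ₁ : ∀ i, ψ₂ i < ψ₁ i

end

/-!
`T` is monotone on the order interval `[ψ₂, ψ₁] ⊆ {0 ≤ φ ≤ M W}` because the uniformized
kernel `p̃` is nonnegative, so the iterates increase from `ψ₂` to their pointwise supremum `u*`.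
To pass to the limit in `u (n+1) = T (u n)` one needs `I_α(i, u n) → I_α(i, u*)`. The two
inf-sup values differ by at most `sup_{μ,ν} ∑_j p̃(j|i,μ,ν) |u* j - u n j|`, and this tends to
`0`: since `(a, b) ↦ ∑_j q(j|i,a,b) W(j)` is continuous, Dini's theorem on the compact action
space `U × V` makes the `W`-weighted tails of `p̃(·|i,a,b)` uniformly small.
-/

open Set

section Kernels

theorem Continuous.integral_le_of_forall_le {X : Type*} [TopologicalSpace X] [CompactSpace X]
    [MeasurableSpace X] [OpensMeasurableSpace X] {π : Measure X} [IsProbabilityMeasure π]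
    {f : X → ℝ} {C : ℝ} (hf : Continuous f) (h : ∀ x, f x ≤ C) : ∫ x, f x ∂π ≤ C :=
  (integral_mono (hf.integrable_of_hasCompactSupport (.of_compactSpace f)) (integrable_const C)
    h).trans_eq (by simp)

variable {X : Type*} [TopologicalSpace X]

structure WeightedKernel (P : ℕ → X → ℝ) (W : ℕ → ℝ) : Prop where
  continuous : ∀ j, Continuous (P j)
  nonneg : ∀ j x, 0 ≤ P j x
  weight_nonneg : ∀ j, 0 ≤ W j
  summable : ∀ x, Summable fun j => P j x * W j
  continuous_tsum : Continuous fun x => ∑' j, P j x * W j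

namespace WeightedKernel

variable {P : ℕ → X → ℝ} {W : ℕ → ℝ} (hk : WeightedKernel P W)
include hk

theorem nat_add (m : ℕ) : WeightedKernel (fun i => P (i + m)) (fun i => W (i + m)) where
  continuous i := hk.continuous (i + m)
  nonneg i := hk.nonneg (i + m)
  weight_nonneg i := hk.weight_nonneg (i + m)
  summable x := (summable_nat_add_iff m).2 (hk.summable x)
  continuous_tsum := by
    have h : ∀ x, ∑' i, P (i + m) x * W (i + m)
        = ∑' j, P j x * W j - ∑ j ∈ Finset.range m, P j x * W j := fun x =>
      eq_sub_of_add_eq' ((hk.summable x).sum_add_tsum_nat_add m)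
    simp_rw [h]
    exact hk.continuous_tsum.sub
      (continuous_finsetSum _ fun j _ => (hk.continuous j).mul continuous_const)

variable [CompactSpace X]

theorem exists_tsum_le : ∃ C, ∀ x, ∑' j, P j x * W j ≤ C :=
  (isCompact_range hk.continuous_tsum).bddAbove.imp fun _ hC x => hC ⟨x, rfl⟩

/-- Dini's theorem applied to the partial sums of the `W`-moment. -/
theorem exists_tsum_nat_add_le {δ : ℝ} (hδ : 0 < δ) :
    ∃ m, ∀ x, ∑' i, P (i + m) x * W (i + m) ≤ δ := by
  have hmono : Monotone fun m x => ∑ j ∈ Finset.range m, P j x * W j := fun _ _ hmn x =>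
    Finset.sum_le_sum_of_subset_of_nonneg (Finset.range_mono hmn) fun j _ _ =>
      mul_nonneg (hk.nonneg j x) (hk.weight_nonneg j)
  have hunif := Monotone.tendstoUniformly_of_forall_tendsto
    (F := fun m x => ∑ j ∈ Finset.range m, P j x * W j)
    (fun m => continuous_finsetSum _ fun j _ => (hk.continuous j).mul continuous_const)
    hmono hk.continuous_tsum fun x => (hk.summable x).hasSum.tendsto_sum_nat
  obtain ⟨m, hm⟩ := (Metric.tendstoUniformly_iff.1 hunif δ hδ).exists
  refine ⟨m, fun x => ?_⟩
  have hsplit := (hk.summable x).sum_add_tsum_nat_add m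
  have hdist := hm x
  rw [Real.dist_eq] at hdist
  linarith [le_abs_self (∑' j, P j x * W j - ∑ j ∈ Finset.range m, P j x * W j)]

variable [MeasurableSpace X] [OpensMeasurableSpace X] {π : Measure X} [IsProbabilityMeasure π]
  {K C : ℝ} {a : ℕ → ℝ}

theorem sum_integral_mul_le (hK : 0 ≤ K) (ha : a ∈ Icc 0 (K • W))
    (hC : ∀ x, ∑' j, P j x * W j ≤ C) (s : Finset ℕ) :
    ∑ j ∈ s, (∫ x, P j x ∂π) * a j ≤ K * C := by
  have hpoint : ∀ x, ∑ j ∈ s, P j x * (K * W j) ≤ K * C := fun x => by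
    simp_rw [mul_left_comm _ K, ← Finset.mul_sum]
    exact mul_le_mul_of_nonneg_left ((hk.summable x).sum_le_tsum s
      (fun j _ => mul_nonneg (hk.nonneg j x) (hk.weight_nonneg j)) |>.trans (hC x)) hK
  calc ∑ j ∈ s, (∫ x, P j x ∂π) * a j ≤ ∑ j ∈ s, (∫ x, P j x ∂π) * (K * W j) :=
        Finset.sum_le_sum fun j _ => mul_le_mul_of_nonneg_left (ha.2 j)
          (integral_nonneg (hk.nonneg j))
    _ = ∫ x, ∑ j ∈ s, P j x * (K * W j) ∂π := by
        rw [integral_finsetSum _ fun j _ =>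
          ((hk.continuous j).integrable_of_hasCompactSupport (.of_compactSpace _)).mul_const _]
        simp_rw [integral_mul_const]
    _ ≤ K * C := (continuous_finsetSum _ fun j _ =>
        (hk.continuous j).mul continuous_const).integral_le_of_forall_le hpoint

theorem summable_integral_mul (hK : 0 ≤ K) (ha : a ∈ Icc 0 (K • W)) :
    Summable fun j => (∫ x, P j x ∂π) * a j :=
  have ⟨_, hC⟩ := hk.exists_tsum_le
  summable_of_sum_le (fun j => mul_nonneg (integral_nonneg (hk.nonneg j)) (ha.1 j))
    (hk.sum_integral_mul_le hK ha hC)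

theorem tsum_integral_mul_le (hK : 0 ≤ K) (ha : a ∈ Icc 0 (K • W))
    (hC : ∀ x, ∑' j, P j x * W j ≤ C) : ∑' j, (∫ x, P j x ∂π) * a j ≤ K * C :=
  (hk.summable_integral_mul hK ha).tsum_le_of_sum_le (hk.sum_integral_mul_le hK ha hC)

/-- The tail beyond some `m` is uniformly small by Dini; the finitely many terms below `m`
tend to `0` with `φ n`. -/
theorem eventually_tsum_integral_mul_le (hK : 0 ≤ K) {φ : ℕ → ℕ → ℝ}
    (hφ : ∀ n, φ n ∈ Icc 0 (K • W)) (hlim : ∀ j, Tendsto (φ · j) atTop (𝓝 0))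
    {ε : ℝ} (hε : 0 < ε) :
    ∀ᶠ n in atTop, ∀ (π : Measure X) [IsProbabilityMeasure π],
      ∑' j, (∫ x, P j x ∂π) * φ n j ≤ ε := by
  obtain ⟨m, hm⟩ := hk.exists_tsum_nat_add_le (δ := ε / (2 * (K + 1))) (by positivity)
  choose B hB using fun j => (isCompact_range (hk.continuous j)).bddAbove
  have hhead : Tendsto (fun n => ∑ j ∈ Finset.range m, B j * φ n j) atTop (𝓝 0) := by
    simpa using tendsto_finsetSum (Finset.range m) fun j _ => (hlim j).const_mul (B j)
  filter_upwards [hhead.eventually (eventually_le_nhds (half_pos hε))] with n hn π _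
  have head : ∑ j ∈ Finset.range m, (∫ x, P j x ∂π) * φ n j
      ≤ ∑ j ∈ Finset.range m, B j * φ n j :=
    Finset.sum_le_sum fun j _ => mul_le_mul_of_nonneg_right
      ((hk.continuous j).integral_le_of_forall_le fun x => hB j ⟨x, rfl⟩) ((hφ n).1 j)
  have tail : ∑' i, (∫ x, P (i + m) x ∂π) * φ n (i + m) ≤ K * (ε / (2 * (K + 1))) :=
    (hk.nat_add m).tsum_integral_mul_le hK
      ⟨fun i => (hφ n).1 (i + m), fun i => (hφ n).2 (i + m)⟩ hm
  have hKε : K * (ε / (2 * (K + 1))) ≤ ε / 2 := by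
    rw [mul_div_assoc', div_le_div_iff₀ (by positivity) two_pos]
    nlinarith
  rw [← (hk.summable_integral_mul hK (hφ n)).sum_add_tsum_nat_add m]
  linarith

end WeightedKernel

end Kernels

instance {Ω : Type*} [MeasurableSpace Ω] [Nonempty Ω] : Nonempty (ProbabilityMeasure Ω) :=
  ⟨⟨Measure.dirac (Classical.arbitrary Ω), inferInstance⟩⟩

theorem iInf_iSup_le_iInf_iSup_add {ι κ : Type*} [Nonempty ι] [Nonempty κ] {f g : ι → κ → ℝ}
    {C ε : ℝ} (hf0 : ∀ x y, 0 ≤ f x y) (hfC : ∀ x y, f x y ≤ C) (hgC : ∀ x y, g x y ≤ C)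
    (h : ∀ x y, f x y ≤ g x y + ε) : ⨅ x, ⨆ y, f x y ≤ (⨅ x, ⨆ y, g x y) + ε := by
  have hf : ∀ x, BddAbove (range (f x)) := fun x => ⟨C, by rintro _ ⟨y, rfl⟩; exact hfC x y⟩
  have hg : ∀ x, BddAbove (range (g x)) := fun x => ⟨C, by rintro _ ⟨y, rfl⟩; exact hgC x y⟩
  have hbdd : BddBelow (range fun x => ⨆ y, f x y) := ⟨0, by
    rintro _ ⟨x, rfl⟩
    exact (hf0 x (Classical.arbitrary κ)).trans (le_ciSup (hf x) _)⟩
  rw [← sub_le_iff_le_add]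
  refine le_ciInf fun x => sub_le_iff_le_add.2 ((ciInf_le hbdd x).trans (ciSup_le fun y => ?_))
  exact (h x y).trans (add_le_add_left (le_ciSup (hg x) y) ε)

theorem integral_prod_eq_iterated {U V : Type*} [MetricSpace U] [CompactSpace U]
    [MeasurableSpace U] [BorelSpace U] [MetricSpace V] [CompactSpace V] [MeasurableSpace V]
    [BorelSpace V] {μ : Measure U} {ν : Measure V} [IsFiniteMeasure μ] [IsFiniteMeasure ν]
    {f : U → V → ℝ} (hf : Continuous fun z : U × V => f z.1 z.2) :
    ∫ z, f z.1 z.2 ∂μ.prod ν = ∫ b, ∫ a, f a b ∂μ ∂ν :=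
  integral_prod_symm _ (hf.integrable_of_hasCompactSupport (.of_compactSpace _))

section MarkovGame

variable {U V : Type} {q : ℕ → ℕ → U → V → ℝ} {r : ℕ → U → V → ℝ} {qb : ℕ → ℝ}
  {N : ℕ} {w : ℕ → ℕ → ℝ} {c : ℝ} {W : ℕ → ℝ} {M : ℝ}

namespace RateHyps

variable (hrate : RateHyps q qb)
include hrate

theorem qb_nonneg [Nonempty U] [Nonempty V] (i : ℕ) : 0 ≤ qb i := by
  obtain ⟨a⟩ := ‹Nonempty U›
  obtain ⟨b⟩ := ‹Nonempty V›
  refine le_trans (tsum_nonneg fun j => ?_) ((hrate.stable i).1 ⟨(a, b), rfl⟩)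
  split_ifs with h
  exacts [le_rfl, hrate.off_nonneg i j a b h]

/-- Conservativeness: the diagonal rate is minus the total off-diagonal rate. -/
theorem neg_qb_le_diag (i : ℕ) (a : U) (b : V) : -qb i ≤ q i i a b := by
  have hsplit := (hrate.summable i a b).tsum_eq_add_tsum_ite i
  rw [hrate.conservative i a b] at hsplit
  linarith [(hrate.stable i).1 ⟨(a, b), rfl⟩]

theorem one_le_add_qb_add_one [Nonempty U] [Nonempty V] {α : ℝ} (hα : 0 < α) (i : ℕ) :
    1 ≤ α + qb i + 1 := by
  linarith [hrate.qb_nonneg i]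

theorem qb_add_one_div_mem_Icc [Nonempty U] [Nonempty V] {α : ℝ} (hα : 0 < α) (i : ℕ) :
    (qb i + 1) / (α + qb i + 1) ∈ Icc 0 1 :=
  ⟨div_nonneg (by linarith [hrate.qb_nonneg i]) (zero_le_one.trans (hrate.one_le_add_qb_add_one hα i)),
    div_le_one_of_le₀ (by linarith) (zero_le_one.trans (hrate.one_le_add_qb_add_one hα i))⟩

end RateHyps

/-- The integrand of `p̃(j|i,·,·)`, as a function of the pair of actions. -/
noncomputable def uniformizedKernel (q : ℕ → ℕ → U → V → ℝ) (qb : ℕ → ℝ) (i j : ℕ)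
    (z : U × V) : ℝ :=
  q i j z.1 z.2 / (qb i + 1) + if i = j then 1 else 0

theorem uniformizedKernel_nonneg [Nonempty U] [Nonempty V] (hrate : RateHyps q qb)
    (i j : ℕ) (z : U × V) : 0 ≤ uniformizedKernel q qb i j z := by
  have hpos : 0 < qb i + 1 := by linarith [hrate.qb_nonneg i]
  unfold uniformizedKernel
  split_ifs with h
  · subst h
    rw [← neg_le_iff_add_nonneg, le_div_iff₀ hpos]
    linarith [hrate.neg_qb_le_diag i z.1 z.2]
  · simpa using div_nonneg (hrate.off_nonneg i j z.1 z.2 (Ne.symm h)) hpos.le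

theorem uniformizedKernel_mul_eq (i j : ℕ) (z : U × V) :
    uniformizedKernel q qb i j z * W j
      = q i j z.1 z.2 * W j / (qb i + 1) + if j = i then W i else 0 := by
  unfold uniformizedKernel
  rcases eq_or_ne i j with rfl | h
  · simp only [if_true]
    ring
  · rw [if_neg h, if_neg h.symm]
    ring

theorem summable_q_mul_W (hA1 : A1Hyps q qb N w c W) (i : ℕ) (a : U) (b : V) :
    Summable fun j => q i j a b * W j := by
  simp_rw [hA1.W_def, Finset.mul_sum]
  exact summable_sum fun n hn => hA1.w_summable n (Finset.mem_range.1 hn) i a b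

variable [TopologicalSpace U] [TopologicalSpace V]

theorem continuous_uniformizedKernel (hA2 : A2Hyps q r W M) (i j : ℕ) :
    Continuous (uniformizedKernel q qb i j) :=
  ((hA2.q_cont i j).div_const _).add continuous_const

theorem weightedKernel_uniformizedKernel [Nonempty U] [Nonempty V] (hrate : RateHyps q qb)
    (hA1 : A1Hyps q qb N w c W) (hA2 : A2Hyps q r W M) (i : ℕ) :
    WeightedKernel (fun j => uniformizedKernel q qb i j) W := by
  have hsum : ∀ z : U × V, Summable fun j => q i j z.1 z.2 * W j / (qb i + 1) :=
    fun z => (summable_q_mul_W hA1 i z.1 z.2).div_const _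
  have htsum : ∀ z : U × V, ∑' j, uniformizedKernel q qb i j z * W j
      = (∑' j, q i j z.1 z.2 * W j) / (qb i + 1) + W i := fun z => by
    simp_rw [uniformizedKernel_mul_eq]
    rw [(hsum z).tsum_add (hasSum_ite_eq i (W i)).summable, tsum_div_const, tsum_ite_eq]
  refine ⟨continuous_uniformizedKernel hA2 i, uniformizedKernel_nonneg hrate i,
    fun j => (hA1.W_pos j).le, fun z => ?_, ?_⟩
  · simp_rw [uniformizedKernel_mul_eq]
    exact (hsum z).add (hasSum_ite_eq i (W i)).summable
  · simp_rw [htsum]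
    exact ((hA2.qW_cont i).div_const _).add continuous_const

end MarkovGame

section MarkovGameIntegrals

variable {U V : Type} [MetricSpace U] [CompactSpace U] [MeasurableSpace U] [BorelSpace U]
  [MetricSpace V] [CompactSpace V] [MeasurableSpace V] [BorelSpace V]
  {q : ℕ → ℕ → U → V → ℝ} {r : ℕ → U → V → ℝ} {qb : ℕ → ℝ} {W : ℕ → ℝ} {M : ℝ}
  {μ : ProbabilityMeasure U} {ν : ProbabilityMeasure V}

theorem rT_eq_integral (hA2 : A2Hyps q r W M) (i : ℕ) :
    rT r i μ ν = ∫ z, r i z.1 z.2 ∂(μ : Measure U).prod ν :=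
  (integral_prod_eq_iterated (hA2.r_cont i)).symm

theorem pT_eq_integral (hA2 : A2Hyps q r W M) (i j : ℕ) :
    pT q qb i j μ ν = ∫ z, uniformizedKernel q qb i j z ∂(μ : Measure U).prod ν := by
  simp only [uniformizedKernel]
  rw [integral_add (((hA2.q_cont i j).integrable_of_hasCompactSupport
    (.of_compactSpace _)).div_const _) (integrable_const _), integral_div,
    integral_prod_eq_iterated (hA2.q_cont i j), integral_const]
  simp [pT, qT]

theorem rT_mem_Icc (hA2 : A2Hyps q r W M) (i : ℕ) : rT r i μ ν ∈ Icc 0 (M * W i) := by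
  refine ⟨integral_nonneg fun b => integral_nonneg fun a => hA2.r_nonneg i a b, ?_⟩
  rw [rT_eq_integral hA2]
  exact (hA2.r_cont i).integral_le_of_forall_le fun z => hA2.r_le i z.1 z.2

end MarkovGameIntegrals

theorem mem_BW_of_mem_Icc {W φ : ℕ → ℝ} {M : ℝ} (hW : ∀ i, 0 < W i) (hφ : φ ∈ Icc 0 (M • W)) :
    φ ∈ BW W :=
  ⟨hφ.1, M, by
    rintro _ ⟨i, rfl⟩
    exact (div_le_iff₀ (hW i)).2 (hφ.2 i)⟩

theorem abs_sub_mem_Icc {K : ℝ} {W φ φ' : ℕ → ℝ} (hφ : φ ∈ Icc 0 (K • W))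
    (hφ' : φ' ∈ Icc 0 (K • W)) : (fun j => |φ' j - φ j|) ∈ Icc 0 (K • W) :=
  ⟨fun _ => abs_nonneg _, fun j =>
    abs_sub_le_of_nonneg_of_le (hφ'.1 j) (hφ'.2 j) (hφ.1 j) (hφ.2 j)⟩

section Operators

variable {U V : Type} [MeasurableSpace U] [MeasurableSpace V]
  {q : ℕ → ℕ → U → V → ℝ} {r : ℕ → U → V → ℝ} {qb : ℕ → ℝ} {α : ℝ} {φ φ' : ℕ → ℝ}

/-- `Iop q r qb α φ i` is by definition `⨅ μ, ⨆ ν, iopPayoff q r qb α φ i μ ν`. -/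
noncomputable def iopPayoff (q : ℕ → ℕ → U → V → ℝ) (r : ℕ → U → V → ℝ) (qb : ℕ → ℝ) (α : ℝ)
    (φ : ℕ → ℝ) (i : ℕ) (μ : ProbabilityMeasure U) (ν : ProbabilityMeasure V) : ℝ :=
  rT r i μ ν / (α + qb i + 1) + ((qb i + 1) / (α + qb i + 1)) * ∑' j, pT q qb i j μ ν * φ j

theorem Tmap_mem_Icc {ψ₁ ψ₂ : ℕ → ℝ} (h : ψ₂ ≤ ψ₁) (φ : ℕ → ℝ) :
    Tmap q r qb α ψ₁ ψ₂ φ ∈ Icc ψ₂ ψ₁ :=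
  ⟨fun i => le_min (le_max_right _ _) (h i), fun _ => min_le_right _ _⟩

variable [MetricSpace U] [CompactSpace U] [Nonempty U] [BorelSpace U]
  [MetricSpace V] [CompactSpace V] [Nonempty V] [BorelSpace V]
  {N : ℕ} {w : ℕ → ℕ → ℝ} {c : ℝ} {W : ℕ → ℝ} {M K : ℝ} {i : ℕ}
  (hrate : RateHyps q qb) (hA1 : A1Hyps q qb N w c W) (hA2 : A2Hyps q r W M)
  (hα : 0 < α) {μ : ProbabilityMeasure U} {ν : ProbabilityMeasure V}

include hrate hA2 in
theorem pT_nonneg (j : ℕ) : 0 ≤ pT q qb i j μ ν := by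
  rw [pT_eq_integral hA2]
  exact integral_nonneg (uniformizedKernel_nonneg hrate i j)

include hrate hA1 hA2 in
theorem summable_pT_mul (hK : 0 ≤ K) (hφ : φ ∈ Icc 0 (K • W)) :
    Summable fun j => pT q qb i j μ ν * φ j := by
  simp_rw [pT_eq_integral hA2]
  exact (weightedKernel_uniformizedKernel hrate hA1 hA2 i).summable_integral_mul hK hφ

include hrate hA2 hα in
theorem iopPayoff_nonneg (hφ : 0 ≤ φ) : 0 ≤ iopPayoff q r qb α φ i μ ν :=
  add_nonneg (div_nonneg (rT_mem_Icc hA2 i).1 (zero_le_one.trans (hrate.one_le_add_qb_add_one hα i)))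
    (mul_nonneg (hrate.qb_add_one_div_mem_Icc hα i).1
      (tsum_nonneg fun j => mul_nonneg (pT_nonneg hrate hA2 j) (hφ j)))

include hrate hA1 hA2 hα in
theorem exists_iopPayoff_le (hK : 0 ≤ K) (i : ℕ) :
    ∃ C, ∀ φ ∈ Icc 0 (K • W), ∀ μ ν, iopPayoff q r qb α φ i μ ν ≤ C := by
  have hk := weightedKernel_uniformizedKernel hrate hA1 hA2 i
  obtain ⟨C, hC⟩ := hk.exists_tsum_le
  refine ⟨M * W i + K * C, fun φ hφ μ ν => add_le_add ?_ ?_⟩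
  · exact (div_le_self (rT_mem_Icc hA2 i).1 (hrate.one_le_add_qb_add_one hα i)).trans
      (rT_mem_Icc hA2 i).2
  · have hsum : ∑' j, pT q qb i j μ ν * φ j ≤ K * C := by
      simp_rw [pT_eq_integral hA2]
      exact hk.tsum_integral_mul_le hK hφ hC
    exact (mul_le_of_le_one_left (tsum_nonneg fun j => mul_nonneg (pT_nonneg hrate hA2 j)
      (hφ.1 j)) (hrate.qb_add_one_div_mem_Icc hα i).2).trans hsum

include hrate hA1 hA2 hα in
theorem iopPayoff_mono (hK : 0 ≤ K) (hφ : φ ∈ Icc 0 (K • W)) (hφ' : φ' ∈ Icc 0 (K • W))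
    (h : φ ≤ φ') : iopPayoff q r qb α φ i μ ν ≤ iopPayoff q r qb α φ' i μ ν :=
  add_le_add_right (mul_le_mul_of_nonneg_left
    ((summable_pT_mul hrate hA1 hA2 hK hφ).tsum_le_tsum
      (fun j => mul_le_mul_of_nonneg_left (h j) (pT_nonneg hrate hA2 j))
      (summable_pT_mul hrate hA1 hA2 hK hφ'))
    (hrate.qb_add_one_div_mem_Icc hα i).1) _

include hrate hA1 hA2 hα in
theorem iopPayoff_le_add (hK : 0 ≤ K) (hφ : φ ∈ Icc 0 (K • W)) (hφ' : φ' ∈ Icc 0 (K • W)) :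
    iopPayoff q r qb α φ' i μ ν
      ≤ iopPayoff q r qb α φ i μ ν + ∑' j, pT q qb i j μ ν * |φ' j - φ j| := by
  have hs := summable_pT_mul (μ := μ) (ν := ν) (i := i) hrate hA1 hA2 hK hφ
  have hs' := summable_pT_mul (μ := μ) (ν := ν) (i := i) hrate hA1 hA2 hK hφ'
  have hdiff : ∑' j, pT q qb i j μ ν * φ' j - ∑' j, pT q qb i j μ ν * φ j
      ≤ ∑' j, pT q qb i j μ ν * |φ' j - φ j| := by
    rw [← hs'.tsum_sub hs]
    refine (hs'.sub hs).tsum_le_tsum (fun j => ?_)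
      (summable_pT_mul hrate hA1 hA2 hK (abs_sub_mem_Icc hφ hφ'))
    rw [← mul_sub]
    exact mul_le_mul_of_nonneg_left (le_abs_self _) (pT_nonneg hrate hA2 j)
  have hc := hrate.qb_add_one_div_mem_Icc hα i
  have hnn : 0 ≤ ∑' j, pT q qb i j μ ν * |φ' j - φ j| :=
    tsum_nonneg fun j => mul_nonneg (pT_nonneg hrate hA2 j) (abs_nonneg _)
  unfold iopPayoff
  nlinarith [mul_le_mul_of_nonneg_left hdiff hc.1, mul_le_of_le_one_left hnn hc.2]

include hrate hA1 hA2 hα in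
theorem Iop_mono (hK : 0 ≤ K) (hφ : φ ∈ Icc 0 (K • W)) (hφ' : φ' ∈ Icc 0 (K • W))
    (h : φ ≤ φ') : Iop q r qb α φ i ≤ Iop q r qb α φ' i := by
  obtain ⟨C, hC⟩ := exists_iopPayoff_le hrate hA1 hA2 hα hK i
  have := iInf_iSup_le_iInf_iSup_add (ε := 0)
    (fun μ ν => iopPayoff_nonneg hrate hA2 hα hφ.1) (hC φ hφ) (hC φ' hφ')
    fun μ ν => (iopPayoff_mono hrate hA1 hA2 hα hK hφ hφ' h).trans (add_zero _).ge
  rwa [add_zero] at this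

include hrate hA1 hA2 hα in
theorem abs_Iop_sub_le (hK : 0 ≤ K) (hφ : φ ∈ Icc 0 (K • W)) (hφ' : φ' ∈ Icc 0 (K • W))
    {ε : ℝ} (h : ∀ μ ν, ∑' j, pT q qb i j μ ν * |φ' j - φ j| ≤ ε) :
    |Iop q r qb α φ' i - Iop q r qb α φ i| ≤ ε := by
  obtain ⟨C, hC⟩ := exists_iopPayoff_le hrate hA1 hA2 hα hK i
  have hle : ∀ {ψ ψ'}, ψ ∈ Icc 0 (K • W) → ψ' ∈ Icc 0 (K • W) →
      (∀ μ ν, ∑' j, pT q qb i j μ ν * |ψ' j - ψ j| ≤ ε) →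
      Iop q r qb α ψ' i ≤ Iop q r qb α ψ i + ε := fun hψ hψ' hε =>
    iInf_iSup_le_iInf_iSup_add (fun μ ν => iopPayoff_nonneg hrate hA2 hα hψ'.1)
      (hC _ hψ') (hC _ hψ) fun μ ν =>
        (iopPayoff_le_add hrate hA1 hA2 hα hK hψ hψ').trans (add_le_add_right (hε μ ν) _)
  rw [abs_sub_le_iff]
  constructor
  · linarith [hle hφ hφ' h]
  · linarith [hle hφ' hφ fun μ ν => by simpa only [abs_sub_comm] using h μ ν]

include hrate hA1 hA2 hα in
theorem tendsto_Iop (hK : 0 ≤ K) {u : ℕ → ℕ → ℝ} (hu : ∀ n, u n ∈ Icc 0 (K • W))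
    (hφ : φ ∈ Icc 0 (K • W)) (hlim : ∀ j, Tendsto (u · j) atTop (𝓝 (φ j))) (i : ℕ) :
    Tendsto (fun n => Iop q r qb α (u n) i) atTop (𝓝 (Iop q r qb α φ i)) := by
  refine Metric.tendsto_nhds.2 fun ε hε => ?_
  have hlim0 : ∀ j, Tendsto (fun n => |u n j - φ j|) atTop (𝓝 0) := fun j => by
    simpa using ((hlim j).sub_const (φ j)).abs
  filter_upwards [(weightedKernel_uniformizedKernel hrate hA1 hA2 i).eventually_tsum_integral_mul_le
    hK (fun n => abs_sub_mem_Icc hφ (hu n)) hlim0 (half_pos hε)] with n hn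
  rw [Real.dist_eq]
  refine (abs_Iop_sub_le hrate hA1 hA2 hα hK hφ (hu n) fun μ ν => ?_).trans_lt (half_lt_self hε)
  simpa only [pT_eq_integral hA2] using hn ((μ : Measure U).prod ν)

include hrate hA1 hA2 hα in
theorem Tmap_mono {ψ₁ ψ₂ : ℕ → ℝ} (hK : 0 ≤ K) (hφ : φ ∈ Icc 0 (K • W))
    (hφ' : φ' ∈ Icc 0 (K • W)) (h : φ ≤ φ') :
    Tmap q r qb α ψ₁ ψ₂ φ ≤ Tmap q r qb α ψ₁ ψ₂ φ' := fun _ =>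
  min_le_min_right _ (max_le_max_right _ (Iop_mono hrate hA1 hA2 hα hK hφ hφ' h))

include hrate hA1 hA2 hα in
theorem tendsto_Tmap {ψ₁ ψ₂ : ℕ → ℝ} (hK : 0 ≤ K) {u : ℕ → ℕ → ℝ}
    (hu : ∀ n, u n ∈ Icc 0 (K • W)) (hφ : φ ∈ Icc 0 (K • W))
    (hlim : ∀ j, Tendsto (u · j) atTop (𝓝 (φ j))) (i : ℕ) :
    Tendsto (fun n => Tmap q r qb α ψ₁ ψ₂ (u n) i) atTop (𝓝 (Tmap q r qb α ψ₁ ψ₂ φ i)) :=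
  ((tendsto_Iop hrate hA1 hA2 hα hK hu hφ hlim i).max tendsto_const_nhds).min tendsto_const_nhds

end Operators

/-- Proposition 2: the iterates are nondecreasing, converge pointwise to some
`u* ∈ B_W(S)`, and `u*` is a fixed point of `T`. -/
theorem stmt17 {U V : Type} [MetricSpace U] [CompactSpace U] [Nonempty U]
    [MeasurableSpace U] [BorelSpace U]
    [MetricSpace V] [CompactSpace V] [Nonempty V]
    [MeasurableSpace V] [BorelSpace V]
    (q : ℕ → ℕ → U → V → ℝ) (r : ℕ → U → V → ℝ) (qb : ℕ → ℝ)
    (N : ℕ) (w : ℕ → ℕ → ℝ) (c : ℝ) (W : ℕ → ℝ) (M : ℝ) (α : ℝ) (ψ₁ ψ₂ : ℕ → ℝ)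
    (hrate : RateHyps q qb) (hA1 : A1Hyps q qb N w c W)
    (hA2 : A2Hyps q r W M) (hψ : PsiHyps ψ₁ ψ₂ W M) (hα : 0 < α) :
    ∀ u : ℕ → ℕ → ℝ, u 0 = ψ₂ → (∀ n, u (n + 1) = Tmap q r qb α ψ₁ ψ₂ (u n)) →
      (∀ (n : ℕ) (i : ℕ), u n i ≤ u (n + 1) i) ∧
      ∃ ustar ∈ BW W,
        (∀ i, Tendsto (fun n => u n i) atTop (𝓝 (ustar i))) ∧
        (∀ i, Tmap q r qb α ψ₁ ψ₂ ustar i = ustar i) := by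
  intro u hu0 hu
  have hψle : ψ₂ ≤ ψ₁ := fun i => (hψ.ψ₂_lt_ψ₁ i).le
  have hM : 0 ≤ M := nonneg_of_mul_nonneg_left
    (((hψ.ψ₂_nonneg 0).trans (hψle 0)).trans (hψ.ψ₁_le 0)) (hA1.W_pos 0)
  have hbox : Icc ψ₂ ψ₁ ⊆ Icc 0 (M • W) := Icc_subset_Icc hψ.ψ₂_nonneg hψ.ψ₁_le
  have hmem : ∀ n, u n ∈ Icc ψ₂ ψ₁ := by
    rintro (_ | n)
    · rw [hu0]
      exact ⟨le_rfl, hψle⟩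
    · exact hu n ▸ Tmap_mem_Icc hψle _
  have hmono : Monotone u := monotone_nat_of_le_succ fun n => by
    induction n with
    | zero => exact hu0 ▸ hu 0 ▸ (Tmap_mem_Icc hψle _).1
    | succ n ih =>
      calc u (n + 1) = Tmap q r qb α ψ₁ ψ₂ (u n) := hu n
        _ ≤ Tmap q r qb α ψ₁ ψ₂ (u (n + 1)) :=
          Tmap_mono hrate hA1 hA2 hα hM (hbox (hmem n)) (hbox (hmem (n + 1))) ih
        _ = u (n + 2) := (hu (n + 1)).symm
  let ustar : ℕ → ℝ := fun i => ⨆ n, u n i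
  have hlim : ∀ i, Tendsto (u · i) atTop (𝓝 (ustar i)) := fun i =>
    tendsto_atTop_ciSup (fun _ _ hmn => hmono hmn i) ⟨ψ₁ i, by
      rintro _ ⟨n, rfl⟩
      exact (hmem n).2 i⟩
  have hustar : ustar ∈ Icc ψ₂ ψ₁ := ⟨fun i => ge_of_tendsto' (hlim i) fun n => (hmem n).1 i,
    fun i => le_of_tendsto' (hlim i) fun n => (hmem n).2 i⟩
  refine ⟨fun n => hmono n.le_succ, ustar, mem_BW_of_mem_Icc hA1.W_pos (hbox hustar), hlim,
    fun i => tendsto_nhds_unique ?_ ((hlim i).comp (tendsto_add_atTop_nat 1))⟩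
  simp_rw [Function.comp_def, hu]
  exact tendsto_Tmap hrate hA1 hA2 hα hM (fun n => hbox (hmem n)) (hbox hustar) hlim i
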